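/- arXiv:1512.01839 — 7 statements merged into one kernel-verified Lean document; each statement's English description precedes it below -/
import Mathlib

section
/- Let C be a systematic binary code of length n with |C| = 2^k, redundancy r = n - k, minimum Hamming distance d, and error-correcting capability t = floor((d-1)/2), and let I be an information set for C. If S ⊆ PAut(C) is a t-PD-set (PD-set) for C with respect to I, then |S| >= E_t, where E_1 = ceil((n-t+1)/(r-t+1)) and E_{j+1} = ceil(((n-t+j+1)*E_j)/(r-t+j+1)) for 1 <= j <= t-1 (the Gordon-Schönheim bound). -/
/-!
STATEMENT 0: Gordon–Schönheim bound for PD-sets of systematic binary codes.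
-/

/-- `gsBound n r t j` is the quantity `E_j` of the Gordon–Schönheim bound:
`E_1 = ⌈(n-t+1)/(r-t+1)⌉` and `E_{j+1} = ⌈((n-t+j+1)·E_j)/(r-t+j+1)⌉`
(with `gsBound n r t 0 = 1`, so that the recursion gives the right `E_1`).
Here `⌈a/b⌉ = (a + (b-1))/b` in natural-number arithmetic. -/
def gsBound (n r t : ℕ) : ℕ → ℕ
  | 0 => 1
  | j + 1 => ((n - t + j + 1) * gsBound n r t j + (r - t + j)) / (r - t + j + 1)

/-- Shifted version of `gsBound` convenient for induction. -/
def gAux (a b : ℕ) : ℕ → ℕ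
  | 0 => 1
  | j + 1 => ((a + j + 1) * gAux a b j + (b + j)) / (b + j + 1)

lemma gsBound_eq_gAux (n r t : ℕ) : ∀ j, gsBound n r t j = gAux (n - t) (r - t) j
  | 0 => rfl
  | j + 1 => by
    rw [gsBound, gAux, gsBound_eq_gAux n r t j]

/-- Schönheim bound: a family of sets of size at most `b + j` inside a ground set
of size `a + j`, covering all `j`-subsets of the ground set, has at least
`gAux a b j` members. -/
lemma schonheim {α : Type*} [DecidableEq α] (a b : ℕ) :
    ∀ (j : ℕ) (G : Finset α) (F : Finset (Finset α)),
      G.card = a + j →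
      (∀ B ∈ F, B ⊆ G) →
      (∀ B ∈ F, B.card ≤ b + j) →
      (∀ E ⊆ G, E.card = j → ∃ B ∈ F, E ⊆ B) →
      gAux a b j ≤ F.card := by
  intro j
  induction j with
  | zero =>
    intro G F hG hsub hsize hcov
    obtain ⟨B, hB, -⟩ := hcov ∅ (by simp) (by simp)
    simpa [gAux] using Finset.card_pos.2 ⟨B, hB⟩
  | succ j ih =>
    intro G F hG hsub hsize hcov
    -- for each x in G, the blocks containing x (with x erased) cover the j-subsets
    -- of G.erase x
    have hx : ∀ x ∈ G, gAux a b j ≤ (F.filter (fun B => x ∈ B)).card := by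
      intro x hxG
      have h1 : gAux a b j ≤ ((F.filter (fun B => x ∈ B)).image (fun B => B.erase x)).card := by
        apply ih (G.erase x)
        · rw [Finset.card_erase_of_mem hxG, hG]
          omega
        · intro B' hB'
          obtain ⟨B, hB, rfl⟩ := Finset.mem_image.1 hB'
          exact Finset.erase_subset_erase x (hsub B (Finset.mem_filter.1 hB).1)
        · intro B' hB'
          obtain ⟨B, hB, rfl⟩ := Finset.mem_image.1 hB'
          have := hsize B (Finset.mem_filter.1 hB).1
          rw [Finset.card_erase_of_mem (Finset.mem_filter.1 hB).2]
          omega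
        · intro E hE hEcard
          have hxE : x ∉ E := fun h => (Finset.mem_erase.1 (hE h)).1 rfl
          obtain ⟨B, hB, hEB⟩ := hcov (insert x E)
            (Finset.insert_subset hxG (hE.trans (Finset.erase_subset x G)))
            (by rw [Finset.card_insert_of_notMem hxE, hEcard])
          refine ⟨B.erase x, Finset.mem_image.2 ⟨B, Finset.mem_filter.2
            ⟨hB, hEB (Finset.mem_insert_self x E)⟩, rfl⟩, ?_⟩
          intro e he
          exact Finset.mem_erase.2 ⟨fun h => hxE (h ▸ he),
            hEB (Finset.mem_insert_of_mem he)⟩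
      exact h1.trans Finset.card_image_le
    -- double counting
    have hcount : (a + j + 1) * gAux a b j ≤ F.card * (b + j + 1) := by
      have h1 : (a + j + 1) * gAux a b j ≤ ∑ x ∈ G, (F.filter (fun B => x ∈ B)).card := by
        calc (a + j + 1) * gAux a b j = ∑ _x ∈ G, gAux a b j := by
              rw [Finset.sum_const, hG, smul_eq_mul, Nat.add_assoc]
          _ ≤ ∑ x ∈ G, (F.filter (fun B => x ∈ B)).card := Finset.sum_le_sum hx
      have h2 : ∑ x ∈ G, (F.filter (fun B => x ∈ B)).card
          = ∑ B ∈ F, (G.filter (fun x => x ∈ B)).card := by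
        simp only [Finset.card_filter]
        rw [Finset.sum_comm]
      have h3 : ∑ B ∈ F, (G.filter (fun x => x ∈ B)).card ≤ F.card * (b + j + 1) := by
        calc ∑ B ∈ F, (G.filter (fun x => x ∈ B)).card ≤ ∑ _B ∈ F, (b + j + 1) := by
              apply Finset.sum_le_sum
              intro B hB
              have : G.filter (fun x => x ∈ B) = B := by
                ext x
                simp only [Finset.mem_filter]
                exact ⟨fun h => h.2, fun h => ⟨hsub B hB h, h⟩⟩
              rw [this]
              exact hsize B hB
          _ = F.card * (b + j + 1) := by rw [Finset.sum_const, smul_eq_mul]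
      calc (a + j + 1) * gAux a b j ≤ ∑ x ∈ G, (F.filter (fun B => x ∈ B)).card := h1
        _ = ∑ B ∈ F, (G.filter (fun x => x ∈ B)).card := h2
        _ ≤ F.card * (b + j + 1) := h3
    rw [gAux]
    have hdiv : (F.card * (b + j + 1) + (b + j)) / (b + j + 1) = F.card := by
      rw [mul_comm, Nat.mul_add_div (by omega), Nat.div_eq_of_lt (by omega), Nat.add_zero]
    calc ((a + j + 1) * gAux a b j + (b + j)) / (b + j + 1)
        ≤ (F.card * (b + j + 1) + (b + j)) / (b + j + 1) :=
          Nat.div_le_div_right (by omega)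
      _ = F.card := hdiv

/-- Singleton-type bound step: distinct codewords remain distinct after puncturing. -/
lemma singleton_aux (n k d : ℕ) (C : Finset (Fin n → ZMod 2))
    (hcard : C.card = 2 ^ k)
    (hd : IsLeast {d' : ℕ | ∃ u ∈ C, ∃ v ∈ C, u ≠ v ∧ hammingDist u v = d'} d) :
    k + (d - 1) ≤ n := by
  obtain ⟨⟨u, hu, v, hv, huv, hduv⟩, hdmin⟩ := hd
  have hd1 : 1 ≤ d := by
    rw [← hduv]
    exact Nat.one_le_iff_ne_zero.2 (fun h => huv (hammingDist_eq_zero.1 h))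
  have hdn : d ≤ n := by
    rw [← hduv]
    simpa using hammingDist_le_card_fintype (x := u) (y := v)
  -- pick a set J of n - (d-1) coordinates
  obtain ⟨J, -, hJcard⟩ := Finset.exists_subset_card_eq
    (show n - (d - 1) ≤ (Finset.univ : Finset (Fin n)).card by simp)
  -- restriction to J is injective on C
  have hinj : Set.InjOn (fun w : Fin n → ZMod 2 => fun i : J => w i.1) ↑C := by
    intro x hx y hy hxy
    by_contra hne
    have hdle : d ≤ hammingDist x y := hdmin ⟨x, hx, y, hy, hne, rfl⟩
    have hsub : (Finset.univ.filter fun i => x i ≠ y i) ⊆ Jᶜ := by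
      intro i hi
      rw [Finset.mem_compl]
      intro hiJ
      exact (Finset.mem_filter.1 hi).2 (congrFun hxy ⟨i, hiJ⟩)
    have : hammingDist x y ≤ Jᶜ.card := Finset.card_le_card hsub
    rw [Finset.card_compl, hJcard, Fintype.card_fin] at this
    omega
  have hle : C.card ≤ Fintype.card (J → ZMod 2) := by
    rw [← Finset.card_univ]
    exact Finset.card_le_card_of_injOn _ (fun a _ => Finset.mem_univ _) hinj
  rw [hcard, Fintype.card_fun, Fintype.card_coe, hJcard, ZMod.card] at hle
  have := (Nat.pow_le_pow_iff_right (by norm_num : 1 < 2)).1 hle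
  omega

/-- If `C ⊆ F_2^n` is a systematic code with `|C| = 2^k`, redundancy `r = n - k`,
minimum distance `d`, error-correcting capability `t = ⌊(d-1)/2⌋`, information set `I`,
and `S ⊆ PAut(C)` is a `t`-PD-set (i.e. a PD-set) for `C` with respect to `I`,
then `|S| ≥ E_t` (the Gordon–Schönheim bound). -/
theorem stmt0 (n k d t : ℕ) (C : Finset (Fin n → ZMod 2)) (hC : C.Nonempty)
    (hcard : C.card = 2 ^ k)
    -- d is the minimum Hamming distance of C
    (hd : IsLeast {d' : ℕ | ∃ u ∈ C, ∃ v ∈ C, u ≠ v ∧ hammingDist u v = d'} d)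
    -- t is the error-correcting capability
    (ht : t = (d - 1) / 2)
    -- I is an information set for C (so C is systematic)
    (I : Finset (Fin n)) (hIcard : I.card = k)
    (hI : (C.image fun v => fun i : I => v i.1).card = 2 ^ k)
    -- S is a set of permutation automorphisms of C
    (S : Finset (Equiv.Perm (Fin n)))
    (hSP : ∀ σ ∈ S, ∀ x ∈ C, (x ∘ σ.symm) ∈ C)
    -- S is a t-PD-set (a PD-set) for C with respect to I
    (hPD : ∀ E : Finset (Fin n), E.card = t → ∃ σ ∈ S, ∀ e ∈ E, σ e ∉ I) :
    gsBound n (n - k) t t ≤ S.card := by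
  clear hI hSP hC
  have hsing : k + (d - 1) ≤ n := singleton_aux n k d C hcard hd
  have htd : t ≤ d - 1 := by rw [ht]; exact Nat.div_le_self _ _
  have htnk : t ≤ n - k := by omega
  have htn : t ≤ n := by omega
  -- each block has exactly n - k elements
  have hblock : ∀ σ : Equiv.Perm (Fin n),
      (Finset.univ.filter (fun i => σ i ∉ I)).card = n - k := by
    intro σ
    have hin : (Finset.univ.filter (fun i => σ i ∈ I)) = I.map σ.symm.toEmbedding := by
      ext i
      simp only [Finset.mem_filter, Finset.mem_univ, true_and, Finset.mem_map,
        Equiv.coe_toEmbedding]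
      constructor
      · intro h; exact ⟨σ i, h, σ.symm_apply_apply i⟩
      · rintro ⟨j, hj, rfl⟩; simpa using hj
    have := Finset.card_filter_add_card_filter_not
      (s := (Finset.univ : Finset (Fin n))) (fun i => σ i ∈ I)
    rw [hin, Finset.card_map, hIcard, Finset.card_univ, Fintype.card_fin] at this
    omega
  have hmain : gAux (n - t) (n - k - t) t ≤
      (S.image (fun σ => Finset.univ.filter (fun i => σ i ∉ I))).card := by
    apply schonheim (n - t) (n - k - t) t Finset.univ
    · rw [Finset.card_univ, Fintype.card_fin]; omega
    · intro B _; exact Finset.subset_univ B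
    · intro B hB
      obtain ⟨σ, -, rfl⟩ := Finset.mem_image.1 hB
      rw [hblock σ]; omega
    · intro E _ hEcard
      obtain ⟨σ, hσS, hσ⟩ := hPD E hEcard
      refine ⟨_, Finset.mem_image.2 ⟨σ, hσS, rfl⟩, ?_⟩
      intro e he
      exact Finset.mem_filter.2 ⟨Finset.mem_univ e, hσ e he⟩
  rw [gsBound_eq_gAux]
  exact hmain.trans Finset.card_image_le
end

section
/- For every integer m >= 4 and every integer s with 1 <= s <= 2^{m-2} - 1, one has g_m(s) >= s + 1. -/
/-- `gm m s` is the nested ceiling expression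
`g_m(s) = ⌈(n/r)·⌈((n-1)/(r-1))·⌈ ... ⌈(n-s+1)/(r-s+1)⌉ ... ⌉⌉⌉`
with `n = 2^m` and `r = 2^m - m - 1`. -/
def gm (m s : ℕ) : ℕ := gsBound (2 ^ m) (2 ^ m - m - 1) s s

theorem Nat.lt_mul_add_div_succ {a b e : ℕ} (hba : b + 1 < a) (he : 0 < e) :
    e < (a * e + b) / (b + 1) := by
  rw [Nat.lt_iff_add_one_le, Nat.le_div_iff_mul_le (Nat.succ_pos b)]
  nlinarith

theorem succ_le_gsBound {n r t : ℕ} (htr : t ≤ r) (hrn : r < n) (j : ℕ) :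
    j + 1 ≤ gsBound n r t j := by
  induction j with
  | zero => simp [gsBound]
  | succ j ih =>
    rw [gsBound]
    exact ih.trans_lt (Nat.lt_mul_add_div_succ (by omega) (by omega))

theorem Nat.two_pow_sub_two_add_le_two_pow (m : ℕ) : 2 ^ (m - 2) + m ≤ 2 ^ m := by
  match m with
  | 0 | 1 => norm_num
  | k + 2 =>
    have := Nat.lt_two_pow_self (n := k)
    rw [Nat.add_sub_cancel, pow_add]
    omega

theorem stmt1_general (m s : ℕ) (hs2 : s ≤ 2 ^ (m - 2) - 1) :
    s + 1 ≤ gm m s := by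
  have := Nat.two_pow_sub_two_add_le_two_pow m
  have : 0 < 2 ^ m := Nat.two_pow_pos m
  exact succ_le_gsBound (by omega) (by omega) s

theorem stmt1 (m s : ℕ) (hm : 4 ≤ m) (hs1 : 1 ≤ s) (hs2 : s ≤ 2 ^ (m - 2) - 1) :
    s + 1 ≤ gm m s :=
  stmt1_general m s hs2
end

section
/- For every integer m >= 4, the maximum of the set { s : 2 <= s <= 2^{m-2} - 1 and g_m(s) = s + 1 } exists and equals floor((2^m - m - 1)/(m + 1)). -/
/-- `E_j ≥ j+1` always (given `n > r ≥ s`). -/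
lemma gsBound_ge (n r s : ℕ) (hrn : r + 1 ≤ n) (hs : s ≤ r) :
    ∀ j, j + 1 ≤ gsBound n r s j
  | 0 => le_refl 1
  | j + 1 => by
    have ih := gsBound_ge n r s hrn hs j
    show j + 2 ≤ ((n - s + j + 1) * gsBound n r s j + (r - s + j)) / (r - s + j + 1)
    rw [Nat.le_div_iff_mul_le (by omega)]
    have h1 : r - s + j + 2 ≤ n - s + j + 1 := by omega
    have h2 : (r - s + j + 2) * (j + 1) ≤ (n - s + j + 1) * gsBound n r s j :=
      Nat.mul_le_mul h1 ih
    nlinarith [h2]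

/-- If `(m+1)s ≤ r`, then `E_j = j+1` for all `j ≤ s`. -/
lemma gsBound_eq (m n r s : ℕ) (hn : n = r + m + 1) (hsr : s ≤ r)
    (hf : (m + 1) * s ≤ r) : ∀ j, j ≤ s → gsBound n r s j = j + 1
  | 0, _ => rfl
  | j + 1, hj => by
    have ih := gsBound_eq m n r s hn hsr hf j (by omega)
    show ((n - s + j + 1) * gsBound n r s j + (r - s + j)) / (r - s + j + 1) = j + 2
    rw [ih]
    obtain ⟨d, hd⟩ : ∃ d, r = s + d := ⟨r - s, by omega⟩
    have e1 : n - s + j + 1 = d + m + j + 2 := by omega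
    have e2 : r - s + j + 1 = d + j + 1 := by omega
    have e3 : r - s + j = d + j := by omega
    rw [e1, e2, e3]
    have hkey : (m + 1) * (j + 1) ≤ d + j + 1 := by
      have h1 : m * (j + 1) ≤ m * s := Nat.mul_le_mul_left m hj
      have g1 : (m + 1) * (j + 1) = m * (j + 1) + (j + 1) := by ring
      have g2 : (m + 1) * s = m * s + s := by ring
      omega
    obtain ⟨A, hA⟩ : ∃ A, (m + 1) * (j + 1) = A + 1 := ⟨(m + 1) * (j + 1) - 1, by have := Nat.mul_pos (show 0 < m + 1 by omega) (show 0 < j + 1 by omega); omega⟩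
    have g3 : (d + m + j + 2) * (j + 1) = (d + j + 1) * (j + 1) + (m + 1) * (j + 1) := by ring
    have g4 : (d + j + 1) * (j + 2) = (d + j + 1) * (j + 1) + (d + j + 1) := by ring
    have hnum : (d + m + j + 2) * (j + 1) + (d + j) = (d + j + 1) * (j + 2) + A := by
      omega
    rw [hnum, Nat.mul_add_div (by omega), Nat.div_eq_of_lt (by omega)]

/-- If `(m+1)s > r`, then `E_s ≥ s+2`. -/
lemma gsBound_large (m n r s : ℕ) (hn : n = r + m + 1) (hs1 : 1 ≤ s) (hsr : s ≤ r)
    (hf : r + 1 ≤ (m + 1) * s) : s + 2 ≤ gsBound n r s s := by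
  obtain ⟨j, rfl⟩ : ∃ j, s = j + 1 := ⟨s - 1, by omega⟩
  have hE := gsBound_ge n r (j + 1) (by omega) hsr j
  show j + 3 ≤ ((n - (j + 1) + j + 1) * gsBound n r (j + 1) j + (r - (j + 1) + j)) /
      (r - (j + 1) + j + 1)
  have e1 : n - (j + 1) + j + 1 = r + m + 1 := by omega
  have e2 : r - (j + 1) + j + 1 = r := by omega
  have e3 : r - (j + 1) + j = r - 1 := by omega
  rw [e1, e2, e3, Nat.le_div_iff_mul_le (by omega)]
  have h1 : (r + m + 1) * (j + 1) ≤ (r + m + 1) * gsBound n r (j + 1) j :=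
    Nat.mul_le_mul_left _ hE
  have h2 : (r + m + 1) * (j + 1) = r * (j + 1) + (m + 1) * (j + 1) := by ring
  have h3 : (j + 3) * r = r * (j + 1) + 2 * r := by ring
  omega

lemma pow_ge (m : ℕ) (hm : 4 ≤ m) : 3 * m + 3 ≤ 2 ^ m := by
  induction m, hm using Nat.le_induction with
  | base => norm_num
  | succ k hk ih =>
    have h2 : 2 ^ (k + 1) = 2 * 2 ^ k := by ring
    omega

/-- For m ≥ 4, the maximum `f_m` of `{ s : 2 ≤ s ≤ 2^{m-2} - 1 ∧ g_m(s) = s + 1 }`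
exists and equals `⌊(2^m - m - 1)/(m + 1)⌋`. -/
theorem stmt2 (m : ℕ) (hm : 4 ≤ m) :
    IsGreatest {s : ℕ | 2 ≤ s ∧ s ≤ 2 ^ (m - 2) - 1 ∧ gm m s = s + 1}
      ((2 ^ m - m - 1) / (m + 1)) := by
  have hpow := pow_ge m hm
  have hP4 : 2 ^ m = 2 ^ (m - 2) * 4 := by
    rw [show (4 : ℕ) = 2 ^ 2 from rfl, ← pow_add]
    congr 1
    omega
  have hP1 : 4 ≤ 2 ^ (m - 2) := by
    calc (4 : ℕ) = 2 ^ 2 := rfl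
    _ ≤ 2 ^ (m - 2) := Nat.pow_le_pow_right (by omega) (by omega)
  obtain ⟨P, hP⟩ : ∃ P, 2 ^ (m - 2) = P := ⟨_, rfl⟩
  obtain ⟨r, hr⟩ : ∃ r, 2 ^ m - m - 1 = r := ⟨_, rfl⟩
  have hnr : 2 ^ m = r + m + 1 := by omega
  rw [hP] at hP4 hP1
  rw [hP, hr]
  obtain ⟨f, hf⟩ : ∃ f, r / (m + 1) = f := ⟨_, rfl⟩
  rw [hf]
  have hdm := Nat.div_add_mod r (m + 1)
  rw [hf] at hdm
  have hmod : r % (m + 1) < m + 1 := Nat.mod_lt _ (by omega)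
  have hf2 : 2 ≤ f := by
    rw [← hf, Nat.le_div_iff_mul_le (by omega)]
    omega
  have hmf : (m + 1) * f ≤ r := by omega
  have hfr : f ≤ r := by
    have := Nat.div_le_self r (m + 1)
    omega
  have hfP : f ≤ P - 1 := by
    have h5 : P * 5 ≤ P * (m + 1) := Nat.mul_le_mul_left P (by omega)
    have hfP' : f < P := by
      rw [← hf, Nat.div_lt_iff_lt_mul (by omega)]
      omega
    omega
  have hPr : P - 1 ≤ r := by omega
  constructor
  · refine ⟨hf2, hfP, ?_⟩
    show gsBound (2 ^ m) (2 ^ m - m - 1) f f = f + 1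
    rw [hr, hnr]
    exact gsBound_eq m (r + m + 1) r f rfl hfr hmf f le_rfl
  · rintro s ⟨hs2, hsP, hgs⟩
    by_contra hlt
    push_neg at hlt
    have h1 : (m + 1) * (f + 1) ≤ (m + 1) * s := Nat.mul_le_mul_left _ (by omega)
    have h2 : (m + 1) * (f + 1) = (m + 1) * f + (m + 1) := by ring
    have hrs : r + 1 ≤ (m + 1) * s := by omega
    have hsr : s ≤ r := by omega
    have hlarge := gsBound_large m (r + m + 1) r s rfl (by omega) hsr hrs
    have hgs' : gsBound (2 ^ m) (2 ^ m - m - 1) s s = s + 1 := hgs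
    rw [hr, hnr] at hgs'
    omega
end

section
/- Let m >= 2, let K be a finite field with 2^m elements, regarded as a vector space over F_2, and let alpha be a generator of the multiplicative group of K. Then for every i with 0 <= i <= 2^m - 2, the m elements alpha^{i+1} - alpha^i, alpha^{i+2} - alpha^i, ..., alpha^{i+m} - alpha^i are linearly independent over F_2. -/
/-!
A relation `∑ g j • (α ^ (i + j + 1) - α ^ i) = 0`, divided by `α ^ i`, says that
`q = ∑ g j • (X ^ (j + 1) - 1)` vanishes at `α`. Since also `q(1) = 0`, the quotient `q / (X - 1)`
vanishes at `α ≠ 1` and has degree `< m`, the degree of the minimal polynomial of the generator `α`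
of `K`; hence `q = 0`, and its coefficients `g j` vanish.
-/

open Polynomial
open scoped IntermediateField

section LinearIndependence

variable {F L : Type*} [Field F] [Field L] [Algebra F L]

theorem Polynomial.eq_zero_of_aeval_eq_zero_of_isRoot_one {x : L} (hx1 : x ≠ 1) {q : F[X]}
    (hdeg : q.natDegree ≤ (minpoly F x).natDegree) (hqx : aeval x q = 0) (hq1 : q.IsRoot 1) :
    q = 0 := by
  by_contra hq
  set r := q /ₘ (X - C 1)
  have hfac : (X - C 1) * r = q := mul_divByMonic_eq_iff_isRoot.mpr hq1
  have hr : r ≠ 0 := by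
    rintro hr
    rw [hr, mul_zero] at hfac
    exact hq hfac.symm
  have hrx : aeval x r = 0 := by
    have h := congrArg (aeval x) hfac
    rw [map_mul, hqx] at h
    simpa [sub_eq_zero, hx1] using h
  have hmin : (minpoly F x).natDegree ≤ r.natDegree :=
    natDegree_le_natDegree (minpoly.degree_le_of_ne_zero F x hr hrx)
  have hq_deg : q.natDegree = r.natDegree + 1 := by
    rw [← hfac, natDegree_mul (X_sub_C_ne_zero 1) hr, natDegree_X_sub_C, add_comm]
  omega

theorem linearIndependent_pow_succ_sub_one {x : L} (hx1 : x ≠ 1) {n : ℕ}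
    (hn : n ≤ (minpoly F x).natDegree) :
    LinearIndependent F fun j : Fin n => x ^ ((j : ℕ) + 1) - 1 := by
  rw [Fintype.linearIndependent_iff]
  intro g hg j
  set q : F[X] := ∑ k : Fin n, C (g k) * (X ^ ((k : ℕ) + 1) - 1)
  have hqx : aeval x q = 0 := by
    simpa [q, Algebra.smul_def] using hg
  have hq1 : q.IsRoot 1 := by
    simp [q, eval_finsetSum]
  have hdeg : q.natDegree ≤ n := by
    refine natDegree_sum_le_of_forall_le _ _ fun k _ => ?_
    refine (natDegree_C_mul_le _ _).trans ?_
    refine (natDegree_sub_le _ _).trans ?_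
    simp only [natDegree_X_pow, natDegree_one]
    omega
  have hq0 : q = 0 := eq_zero_of_aeval_eq_zero_of_isRoot_one hx1 (hdeg.trans hn) hqx hq1
  have hcoeff : q.coeff ((j : ℕ) + 1) = g j := by
    simp [q, finsetSum_coeff, coeff_X_pow, coeff_one, Fin.val_inj]
  rw [← hcoeff, hq0, coeff_zero]

theorem linearIndependent_pow_add_succ_sub_pow {x : L} (hx0 : x ≠ 0) (hx1 : x ≠ 1) {n : ℕ}
    (hn : n ≤ (minpoly F x).natDegree) (i : ℕ) :
    LinearIndependent F fun j : Fin n => x ^ (i + (j : ℕ) + 1) - x ^ i := by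
  have hmul : Function.Injective (LinearMap.mulLeft F (x ^ i)) :=
    mul_right_injective₀ (pow_ne_zero i hx0)
  have hfun : (fun j : Fin n => x ^ (i + (j : ℕ) + 1) - x ^ i) =
      LinearMap.mulLeft F (x ^ i) ∘ fun j : Fin n => x ^ ((j : ℕ) + 1) - 1 := by
    ext j
    simp only [Function.comp_apply, LinearMap.mulLeft_apply]
    ring
  rw [hfun]
  exact (linearIndependent_pow_succ_sub_one hx1 hn).map' _ (LinearMap.ker_eq_bot.mpr hmul)

end LinearIndependence

theorem IntermediateField.adjoin_simple_eq_top_of_forall_mem_zpowers {F K : Type*} [Field F]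
    [Field K] [Algebra F K] (α : Kˣ) (hα : ∀ x : Kˣ, x ∈ Subgroup.zpowers α) :
    F⟮(α : K)⟯ = ⊤ := by
  rw [eq_top_iff]
  rintro x -
  rcases eq_or_ne x 0 with rfl | hx
  · exact zero_mem _
  obtain ⟨n, hn⟩ := hα (Units.mk0 x hx)
  rw [show x = (α : K) ^ n by simpa using congrArg Units.val hn.symm]
  exact zpow_mem (mem_adjoin_simple_self F _) n

theorem stmt4_general (m : ℕ) (hm : 2 ≤ m) (K : Type) [Field K] [Fintype K]
    [Algebra (ZMod 2) K]
    (hK : Fintype.card K = 2 ^ m)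
    (α : Kˣ) (hα : ∀ x : Kˣ, x ∈ Subgroup.zpowers α)
    (i : ℕ) :
    LinearIndependent (ZMod 2)
      (fun j : Fin m => (α : K) ^ (i + (j : ℕ) + 1) - (α : K) ^ i) := by
  have hfinrank : Module.finrank (ZMod 2) K = m := by
    have h := Module.card_eq_pow_finrank (K := ZMod 2) (V := K)
    rw [ZMod.card, hK] at h
    exact Nat.pow_right_injective le_rfl h.symm
  have hdeg : (minpoly (ZMod 2) (α : K)).natDegree = m := hfinrank ▸
    (Field.primitive_element_iff_minpoly_natDegree_eq _ _).mp
      (IntermediateField.adjoin_simple_eq_top_of_forall_mem_zpowers α hα)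
  have hα1 : (α : K) ≠ 1 := by
    rintro h
    rw [h, minpoly.one, ← C_1, natDegree_X_sub_C] at hdeg
    omega
  exact linearIndependent_pow_add_succ_sub_pow α.ne_zero hα1 hdeg.ge i

/-- Let `K` be a finite field with `2^m` elements (`m ≥ 2`), viewed as a vector space
over `F_2 = ZMod 2` (any field of cardinality `2^m` has characteristic 2, hence carries
a unique `ZMod 2`-algebra structure, supplied here as an instance), and let `α` be a
generator of the multiplicative group `Kˣ`.  Then for every `0 ≤ i ≤ 2^m - 2`, the `m`
elements `α^{i+1} - α^i, …, α^{i+m} - α^i` are linearly independent over `F_2`. -/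
theorem stmt4 (m : ℕ) (hm : 2 ≤ m) (K : Type) [Field K] [Fintype K]
    [Algebra (ZMod 2) K]
    (hK : Fintype.card K = 2 ^ m)
    (α : Kˣ) (hα : ∀ x : Kˣ, x ∈ Subgroup.zpowers α)
    (i : ℕ) (hi : i ≤ 2 ^ m - 2) :
    LinearIndependent (ZMod 2)
      (fun j : Fin m => (α : K) ^ (i + (j : ℕ) + 1) - (α : K) ^ i) :=
  stmt4_general m hm K hK α hα i
end

section
/- Let m >= 4, set f_m = floor((2^m - m - 1)/(m + 1)), let K be a finite field with 2^m elements, alpha a generator of K^×, and identify F_2^m with K via the basis 1, alpha, ..., alpha^{m-1}. Define the (m+1)x(m+1) matrices over F_2: N_0 with rows (1, 0), (0, 1), (0, alpha), ..., (0, alpha^{m-1}) (the identity matrix under this identification), and for 1 <= i <= f_m, N_i with rows (1, alpha^{(m+1)i-1}), (0, alpha^{(m+1)i} - alpha^{(m+1)i-1}), ..., (0, alpha^{(m+1)i+m-1} - alpha^{(m+1)i-1}), field elements written as coordinate vectors in F_2^m. Then each N_i is invertible with first column e_1, so N_i lies in PAut(H_m), and the set P = {N_i^{-1} : 0 <= i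 <= f_m} is an f_m-PD-set of size f_m + 1 for the binary linear Hadamard code H_m with respect to the information set I_m. -/
/-!
The binary linear Hadamard code `H_m` of length `2^m`: its coordinate positions are
indexed by the vectors `w = (1, v)` with `v ∈ F_2^m` (the columns of the generator
matrix), which we identify with `v : Fin m → ZMod 2`.  Its permutation automorphism
group is identified with the subgroup of `GL(m+1, F_2)` of invertible matrices whose
first column is `e_1`; such a matrix `M` acts on positions by `w ↦ w·M`.
-/

/-- Membership in `PAut(H_m)`, viewed as matrices: `M` is invertible and its first
column is `e₁`. -/
def inPAutH (m : ℕ) (M : Matrix (Fin (m + 1)) (Fin (m + 1)) (ZMod 2)) : Prop :=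
  IsUnit M ∧ ∀ r, M r 0 = if r = 0 then 1 else 0

/-- The action of a matrix `M ∈ PAut(H_m)` on the coordinate position labelled by
`w = (1, v)`: the position labelled `v` is sent to the position labelled by the last
`m` coordinates of the row vector `(1, v) · M` (its first coordinate is again `1`). -/
def hadAct (m : ℕ) (M : Matrix (Fin (m + 1)) (Fin (m + 1)) (ZMod 2))
    (v : Fin m → ZMod 2) : Fin m → ZMod 2 :=
  fun j => Matrix.vecMul (Fin.cons 1 v) M j.succ

/-- The information set `I_m = {e₁, e₁+e₂, …, e₁+e_{m+1}}` for `H_m`, in terms of the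
labels `v` (namely `v = 0` and `v = e_j`, `j = 1, …, m`). -/
def hadInfo (m : ℕ) : Finset (Fin m → ZMod 2) :=
  insert 0 (Finset.univ.image fun j : Fin m => Pi.single j 1)

/-- For a matrix `M` with rows `m₁, …, m_{m+1}`, the matrix `M^*` has first row `m₁`
and `i`-th row `m₁ + m_i` for `i ≥ 2`. -/
def starB (m : ℕ) (M : Matrix (Fin (m + 1)) (Fin (m + 1)) (ZMod 2)) :
    Matrix (Fin (m + 1)) (Fin (m + 1)) (ZMod 2) :=
  fun r c => if r = 0 then M 0 c else M 0 c + M r c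


/-!
`N_i` is the affine frame matrix of the points `α^((m+1)i-1), α^((m+1)i), …, α^((m+1)i+m-1)`
of `K ≅ F_2^m` (of `0, 1, α, …, α^(m-1)` for `i = 0`): it sends the positions of `I_m` to
these `m + 1` points. It is invertible because `1, α, …, α^m` are affinely independent: a
relation among the `α^(j+1) - 1` is a polynomial of degree `≤ m` vanishing at `1` and at `α`,
whose quotient by `X - 1` has degree `< m` and still vanishes at `α`, hence is zero.
The exponent windows are disjoint and stay below the order `2^m - 1` of `α`, so the sets
`N_i(I_m)` are pairwise disjoint; a set of `f_m` positions misses one of these `f_m + 1` sets,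
and the corresponding `N_i⁻¹` moves it off `I_m`.
-/

open Polynomial

section FrameMatrix

variable {R : Type*} {m : ℕ}

def frameMatrix [Ring R] (p₀ : Fin m → R) (p : Fin m → Fin m → R) :
    Matrix (Fin (m + 1)) (Fin (m + 1)) R :=
  Matrix.of (Fin.cons (Fin.cons 1 p₀) fun j => Fin.cons 0 (p j - p₀))

theorem frameMatrix_apply_zero_right [Ring R] (p₀ : Fin m → R) (p : Fin m → Fin m → R)
    (r : Fin (m + 1)) : frameMatrix p₀ p r 0 = if r = 0 then 1 else 0 := by
  refine Fin.cases ?_ (fun j => ?_) r <;> simp [frameMatrix, Fin.succ_ne_zero]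

theorem det_frameMatrix [CommRing R] (p₀ : Fin m → R) (p : Fin m → Fin m → R) :
    (frameMatrix p₀ p).det = (Matrix.of fun j => p j - p₀).det := by
  rw [Matrix.det_succ_column_zero, Fin.sum_univ_succ]
  simp [frameMatrix_apply_zero_right, Fin.succ_ne_zero]
  rfl

theorem isUnit_frameMatrix_iff [Field R] (p₀ : Fin m → R) (p : Fin m → Fin m → R) :
    IsUnit (frameMatrix p₀ p) ↔ LinearIndependent R fun j => p j - p₀ := by
  rw [Matrix.isUnit_iff_isUnit_det, det_frameMatrix, ← Matrix.isUnit_iff_isUnit_det,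
    ← Matrix.linearIndependent_rows_iff_isUnit]
  rfl

theorem hadAct_frameMatrix_zero (p₀ : Fin m → ZMod 2) (p : Fin m → Fin m → ZMod 2) :
    hadAct m (frameMatrix p₀ p) 0 = p₀ := by
  ext j
  simp [hadAct, frameMatrix, Matrix.vecMul, dotProduct, Fin.sum_univ_succ]

theorem hadAct_frameMatrix_single (p₀ : Fin m → ZMod 2) (p : Fin m → Fin m → ZMod 2)
    (k : Fin m) : hadAct m (frameMatrix p₀ p) (Pi.single k 1) = p k := by
  ext j
  simp [hadAct, frameMatrix, Matrix.vecMul, dotProduct, Fin.sum_univ_succ, Pi.single_apply]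

theorem image_hadInfo_frameMatrix (p₀ : Fin m → ZMod 2)
    (p : Fin m → Fin m → ZMod 2) :
    (hadInfo m).image (hadAct m (frameMatrix p₀ p)) = insert p₀ (Finset.univ.image p) := by
  simp [hadInfo, Finset.image_insert, Finset.image_image, Function.comp_def,
    hadAct_frameMatrix_zero, hadAct_frameMatrix_single]

end FrameMatrix

section PAut

variable {m : ℕ}

theorem cons_one_vecMul_eq_cons_hadAct {M : Matrix (Fin (m + 1)) (Fin (m + 1)) (ZMod 2)}
    (hM : ∀ r, M r 0 = if r = 0 then 1 else 0) (v : Fin m → ZMod 2) :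
    Matrix.vecMul (Fin.cons 1 v) M = Fin.cons 1 (hadAct m M v) := by
  ext k
  refine Fin.cases ?_ (fun j => rfl) k
  simp [Matrix.vecMul, dotProduct, hM]

theorem hadAct_mul {A : Matrix (Fin (m + 1)) (Fin (m + 1)) (ZMod 2)}
    (hA : ∀ r, A r 0 = if r = 0 then 1 else 0) (B : Matrix (Fin (m + 1)) (Fin (m + 1)) (ZMod 2))
    (v : Fin m → ZMod 2) : hadAct m (A * B) v = hadAct m B (hadAct m A v) := by
  ext j
  simp only [hadAct, ← Matrix.vecMul_vecMul, cons_one_vecMul_eq_cons_hadAct hA]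

theorem hadAct_one (v : Fin m → ZMod 2) : hadAct m 1 v = v := by
  ext j
  simp [hadAct]

theorem inPAutH.inv {M : Matrix (Fin (m + 1)) (Fin (m + 1)) (ZMod 2)} (hM : inPAutH m M) :
    inPAutH m M⁻¹ := by
  have hdet : IsUnit M.det := (Matrix.isUnit_iff_isUnit_det M).mp hM.1
  refine ⟨(Matrix.isUnit_nonsing_inv_iff).mpr hM.1, fun r => ?_⟩
  have h := congrFun (congrFun (Matrix.nonsing_inv_mul M hdet) r) 0
  simpa [Matrix.mul_apply, hM.2, Matrix.one_apply, eq_comm] using h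

theorem hadAct_hadAct_inv {M : Matrix (Fin (m + 1)) (Fin (m + 1)) (ZMod 2)} (hM : inPAutH m M)
    (v : Fin m → ZMod 2) : hadAct m M (hadAct m M⁻¹ v) = v := by
  rw [← hadAct_mul hM.inv.2, Matrix.nonsing_inv_mul _ ((Matrix.isUnit_iff_isUnit_det M).mp hM.1),
    hadAct_one]

end PAut

theorem Finset.exists_disjoint_of_card_lt {ι α : Type*} [DecidableEq α] {s : Finset ι}
    {A : ι → Finset α} {E : Finset α} (hA : (s : Set ι).PairwiseDisjoint A)
    (hE : E.card < s.card) : ∃ i ∈ s, Disjoint E (A i) := by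
  by_contra! h
  have hmeet : s.card ≤ (s.biUnion fun i => E ∩ A i).card :=
    Finset.card_le_card_biUnion (hA.mono fun i => Finset.inter_subset_right)
      fun i hi => Finset.not_disjoint_iff_nonempty_inter.mp (h i hi)
  have hsub : (s.biUnion fun i => E ∩ A i) ⊆ E :=
    Finset.biUnion_subset.mpr fun i _ => Finset.inter_subset_left
  exact (hE.trans_le hmeet).not_ge (Finset.card_le_card hsub)

theorem exists_forall_hadAct_inv_notMem_hadInfo {m : ℕ} {ι : Type*} {s : Finset ι}
    {M : ι → Matrix (Fin (m + 1)) (Fin (m + 1)) (ZMod 2)} (hM : ∀ i ∈ s, inPAutH m (M i))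
    (hdisj : (s : Set ι).PairwiseDisjoint fun i => (hadInfo m).image (hadAct m (M i)))
    {E : Finset (Fin m → ZMod 2)} (hE : E.card < s.card) :
    ∃ i ∈ s, ∀ v ∈ E, hadAct m (M i)⁻¹ v ∉ hadInfo m := by
  obtain ⟨i, hi, hEi⟩ := Finset.exists_disjoint_of_card_lt hdisj hE
  refine ⟨i, hi, fun v hv hvI => Finset.disjoint_left.mp hEi hv ?_⟩
  rw [← hadAct_hadAct_inv (hM i hi) v]
  exact Finset.mem_image_of_mem _ hvI

section PowerIndependence

variable {F K : Type*} [Field F] [Field K] [Algebra F K] {m : ℕ} {α : K}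

theorem eq_zero_of_aeval_eq_zero_of_natDegree_lt
    (hli : LinearIndependent F fun j : Fin m => α ^ (j : ℕ)) {p : F[X]}
    (hdeg : p.natDegree < m) (hp : aeval α p = 0) : p = 0 := by
  have hsum : ∑ j : Fin m, p.coeff j • α ^ (j : ℕ) = 0 := by
    rw [Fin.sum_univ_eq_sum_range (fun i => p.coeff i • α ^ i), ← aeval_eq_sum_range' hdeg, hp]
  have hcoeff := Fintype.linearIndependent_iff.mp hli (fun j => p.coeff j) hsum
  ext i
  rcases lt_or_ge i m with hi | hi
  · exact hcoeff ⟨i, hi⟩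
  · exact coeff_eq_zero_of_natDegree_lt (hdeg.trans_le hi)

theorem linearIndependent_pow_succ_sub_one_s5 (hα1 : α ≠ 1)
    (hli : LinearIndependent F fun j : Fin m => α ^ (j : ℕ)) :
    LinearIndependent F fun j : Fin m => α ^ ((j : ℕ) + 1) - 1 := by
  refine Fintype.linearIndependent_iff.mpr fun g hg j => ?_
  set q : F[X] := ∑ l : Fin m, C (g l) * (X ^ ((l : ℕ) + 1) - 1)
  have hq1 : q.IsRoot 1 := by simp [q, eval_finsetSum]
  have hqα : aeval α q = 0 := by
    simpa [q, Algebra.smul_def] using hg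
  have hqdeg : q.natDegree ≤ m := by
    refine natDegree_sum_le_of_forall_le _ _ fun l _ => (natDegree_C_mul_le _ _).trans ?_
    refine (natDegree_sub_le _ _).trans ?_
    simp [l.isLt]
  set r := q /ₘ (X - C 1)
  have hqr : (X - C 1) * r = q := mul_divByMonic_eq_iff_isRoot.mpr hq1
  have hr : r = 0 := by
    refine eq_zero_of_aeval_eq_zero_of_natDegree_lt hli ?_ ?_
    · rw [natDegree_divByMonic _ (monic_X_sub_C 1), natDegree_X_sub_C]
      have := j.isLt
      omega
    · rw [← hqr, map_mul] at hqα
      simpa [sub_eq_zero, hα1] using hqα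
  have hq0 : q = 0 := by rw [← hqr, hr, mul_zero]
  simpa [q, finsetSum_coeff, coeff_X_pow, coeff_one, Fin.val_inj] using
    congrArg (coeff · ((j : ℕ) + 1)) hq0

theorem linearIndependent_pow_add_succ_sub_pow_s5 (hα0 : α ≠ 0) (hα1 : α ≠ 1)
    (hli : LinearIndependent F fun j : Fin m => α ^ (j : ℕ)) (n : ℕ) :
    LinearIndependent F fun j : Fin m => α ^ (n + ((j : ℕ) + 1)) - α ^ n := by
  have hmul : Function.Injective (LinearMap.mulLeft F (α ^ n)) :=
    mul_right_injective₀ (pow_ne_zero n hα0)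
  simpa [Function.comp_def, pow_add, mul_sub] using
    (linearIndependent_pow_succ_sub_one_s5 hα1 hli).map' _ (LinearMap.ker_eq_bot.mpr hmul)

end PowerIndependence

theorem LinearIndependent.map_addEquiv {n : ℕ} {ι M M' : Type*} [AddCommGroup M]
    [Module (ZMod n) M] [AddCommGroup M'] [Module (ZMod n) M'] {v : ι → M}
    (hv : LinearIndependent (ZMod n) v) (e : M ≃+ M') : LinearIndependent (ZMod n) (e ∘ v) :=
  hv.map_of_injective_injective id e.toAddMonoidHom (fun _ h => h)
    (fun _ h => e.map_eq_zero_iff.mp h) (ZMod.map_smul e)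

section Coordinates

variable {K : Type*} [AddCommGroup K] [Module (ZMod 2) K] {m : ℕ} (c : K ≃+ (Fin m → ZMod 2))

theorem linearIndependent_of_coordinates {b : Fin m → K}
    (hc : ∀ x : K, x = ∑ j, if c x j = 1 then b j else 0) : LinearIndependent (ZMod 2) b := by
  have hb : ∀ j, c.symm (Pi.single j 1) = b j := fun j => by
    rw [hc (c.symm _)]
    simp [Pi.single_apply]
  simpa [Function.comp_def, hb] using
    (Pi.basisFun (ZMod 2) (Fin m)).linearIndependent.map_addEquiv c.symm

theorem isUnit_frameMatrix_addEquiv {b : K} {a : Fin m → K}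
    (h : LinearIndependent (ZMod 2) fun j => a j - b) :
    IsUnit (frameMatrix (c b) fun j => c (a j)) := by
  rw [isUnit_frameMatrix_iff]
  simpa [Function.comp_def] using h.map_addEquiv c

end Coordinates

section PDMatrix

variable {K : Type*} [Field K] {m : ℕ} (c : K ≃+ (Fin m → ZMod 2))

def pdMatrix (α : K) (i : ℕ) : Matrix (Fin (m + 1)) (Fin (m + 1)) (ZMod 2) :=
  if i = 0 then frameMatrix (c 0) fun j => c (α ^ (j : ℕ))
  else frameMatrix (c (α ^ ((m + 1) * i - 1))) fun j => c (α ^ ((m + 1) * i - 1 + ((j : ℕ) + 1)))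

theorem pdMatrix_zero (α : K) :
    pdMatrix c α 0 = Matrix.of (Fin.cons (Fin.cons 1 (c 0))
      fun j : Fin m => Fin.cons 0 (c (α ^ (j : ℕ)))) := by
  simp [pdMatrix, frameMatrix]

theorem pdMatrix_of_ne_zero (α : K) {i : ℕ} (hi : i ≠ 0) :
    pdMatrix c α i = Matrix.of (Fin.cons (Fin.cons 1 (c (α ^ ((m + 1) * i - 1))))
      fun j : Fin m => Fin.cons 0 (c (α ^ ((m + 1) * i + (j : ℕ)) - α ^ ((m + 1) * i - 1)))) := by
  have hpos : 1 ≤ (m + 1) * i := Nat.one_le_iff_ne_zero.mpr (by positivity)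
  simp only [pdMatrix, frameMatrix, hi, if_false, map_sub]
  congr 5 with j
  rw [show (m + 1) * i - 1 + ((j : ℕ) + 1) = (m + 1) * i + j by omega]

variable {α : K}

theorem inPAutH_pdMatrix [Algebra (ZMod 2) K] (hα0 : α ≠ 0) (hα1 : α ≠ 1)
    (hli : LinearIndependent (ZMod 2) fun j : Fin m => α ^ (j : ℕ)) (i : ℕ) :
    inPAutH m (pdMatrix c α i) := by
  unfold pdMatrix
  split_ifs
  · exact ⟨isUnit_frameMatrix_addEquiv c (by simpa using hli), frameMatrix_apply_zero_right _ _⟩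
  · exact ⟨isUnit_frameMatrix_addEquiv c (linearIndependent_pow_add_succ_sub_pow_s5 hα0 hα1 hli _),
      frameMatrix_apply_zero_right _ _⟩

theorem mem_image_hadInfo_pdMatrix {i : ℕ} {v : Fin m → ZMod 2}
    (hv : v ∈ (hadInfo m).image (hadAct m (pdMatrix c α i))) :
    (i = 0 ∧ v = c 0) ∨ ∃ e < (m + 1) * (i + 1) - 1, (e + 1) / (m + 1) = i ∧ v = c (α ^ e) := by
  have hblock : (m + 1) * (i + 1) = i * (m + 1) + (m + 1) := by ring
  have hblock' : (i + 1) * (m + 1) = i * (m + 1) + (m + 1) := by ring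
  have hcomm : (m + 1) * i = i * (m + 1) := mul_comm _ _
  unfold pdMatrix at hv
  split_ifs at hv with hi
  · subst hi
    rw [image_hadInfo_frameMatrix] at hv
    simp only [Finset.mem_insert, Finset.mem_image, Finset.mem_univ, true_and] at hv
    rcases hv with hv | ⟨j, rfl⟩
    · exact Or.inl ⟨rfl, hv⟩
    · exact Or.inr ⟨j, by simp, Nat.div_eq_of_lt (by simp), rfl⟩
  · have hpos : 1 ≤ (m + 1) * i := Nat.one_le_iff_ne_zero.mpr (by positivity)
    rw [image_hadInfo_frameMatrix] at hv
    simp only [Finset.mem_insert, Finset.mem_image, Finset.mem_univ, true_and] at hv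
    refine Or.inr ?_
    rcases hv with rfl | ⟨j, rfl⟩ <;>
      exact ⟨_, by omega, Nat.div_eq_of_lt_le (by omega) (by omega), rfl⟩

theorem pairwiseDisjoint_image_hadInfo_pdMatrix (hα0 : α ≠ 0) {s : ℕ}
    (hinj : Set.InjOn (α ^ ·) (Set.Iio ((m + 1) * s - 1))) :
    (Finset.range s : Set ℕ).PairwiseDisjoint
      fun i => (hadInfo m).image (hadAct m (pdMatrix c α i)) := by
  have hbound : ∀ i ∈ (Finset.range s : Set ℕ), (m + 1) * (i + 1) - 1 ≤ (m + 1) * s - 1 :=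
    fun i hi => Nat.sub_le_sub_right (Nat.mul_le_mul_left _ (Finset.mem_range.mp hi)) 1
  have hne : ∀ e, c (α ^ e) ≠ c 0 := fun e h => pow_ne_zero e hα0 (c.injective h)
  intro i hi j hj hij
  refine Finset.disjoint_left.mpr fun v hvi hvj => ?_
  rcases mem_image_hadInfo_pdMatrix c hvi with ⟨rfl, rfl⟩ | ⟨e, he, rfl, rfl⟩ <;>
    rcases mem_image_hadInfo_pdMatrix c hvj with ⟨rfl, h⟩ | ⟨e', he', rfl, h⟩
  · exact hij rfl
  · exact hne e' h.symm
  · exact hne e h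
  · have hee' : e = e' := hinj (he.trans_le (hbound _ hi)) (he'.trans_le (hbound _ hj))
      (c.injective h)
    exact hij (hee' ▸ rfl)

end PDMatrix

theorem Nat.mul_div_sub_add_one_le {k n : ℕ} (h : k ≤ n) : k * ((n - k) / k + 1) ≤ n := by
  have := Nat.div_mul_le_self (n - k) k
  rw [mul_add, mul_one, mul_comm]
  omega

/-- Explicit construction of an `f_m`-PD-set of minimum size `f_m + 1` for `H_m`,
where `f_m = ⌊(2^m - m - 1)/(m + 1)⌋`.  Here `K` is a finite field with `2^m`
elements, `α` a generator of `Kˣ`, and `F_2^m` is identified with `K` via the basis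
`1, α, …, α^{m-1}`: the identification is given by the additive bijection
`c : K ≃+ (Fin m → ZMod 2)` sending `x` to its coordinates, i.e.
`x = ∑_j c(x)_j · α^j`.  The matrices `N_0` (rows `(1,0), (0,1), (0,α), …,
(0,α^{m-1})`) and `N_i` for `1 ≤ i ≤ f_m` (rows `(1, α^{(m+1)i-1})`,
`(0, α^{(m+1)i+j} - α^{(m+1)i-1})` for `j = 0, …, m-1`) all lie in `PAut(H_m)`, and
`P = {N_i⁻¹ : 0 ≤ i ≤ f_m}` is an `f_m`-PD-set of size `f_m + 1` for `H_m` with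
respect to the information set `I_m`. -/
theorem stmt5 (m : ℕ) (hm : 4 ≤ m) (K : Type) [Field K] [Fintype K]
    (hK : Fintype.card K = 2 ^ m)
    (α : Kˣ) (hα : ∀ x : Kˣ, x ∈ Subgroup.zpowers α)
    (c : K ≃+ (Fin m → ZMod 2))
    (hc : ∀ x : K, x = ∑ j : Fin m, if c x j = 1 then (α : K) ^ (j : ℕ) else 0)
    (N : ℕ → Matrix (Fin (m + 1)) (Fin (m + 1)) (ZMod 2))
    (hN0 : N 0 = Matrix.of (Fin.cons (Fin.cons 1 (c 0))
      (fun j : Fin m => Fin.cons 0 (c ((α : K) ^ (j : ℕ))))))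
    (hNi : ∀ i, 1 ≤ i → N i = Matrix.of (Fin.cons
      (Fin.cons 1 (c ((α : K) ^ ((m + 1) * i - 1))))
      (fun j : Fin m => Fin.cons 0
        (c ((α : K) ^ ((m + 1) * i + (j : ℕ)) - (α : K) ^ ((m + 1) * i - 1)))))) :
    (∀ i, i ≤ (2 ^ m - m - 1) / (m + 1) → inPAutH m (N i)) ∧
    (∀ i j, i ≤ (2 ^ m - m - 1) / (m + 1) → j ≤ (2 ^ m - m - 1) / (m + 1) →
      (N i)⁻¹ = (N j)⁻¹ → i = j) ∧
    (∀ E : Finset (Fin m → ZMod 2), E.card = (2 ^ m - m - 1) / (m + 1) →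
      ∃ i ≤ (2 ^ m - m - 1) / (m + 1), ∀ v ∈ E, hadAct m (N i)⁻¹ v ∉ hadInfo m) := by
  have : CharP K 2 := charP_of_card_eq_prime_pow hK
  let _ : Algebra (ZMod 2) K := ZMod.algebra K 2
  have hord : orderOf (α : K) = 2 ^ m - 1 := by
    rw [orderOf_units, orderOf_eq_card_of_forall_mem_zpowers hα, Nat.card_units,
      Nat.card_eq_fintype_card, hK]
  have hα1 : (α : K) ≠ 1 := fun h => by
    have : 2 ^ 4 ≤ 2 ^ m := Nat.pow_le_pow_right two_pos hm
    rw [h, orderOf_one] at hord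
    omega
  have hN : N = pdMatrix c α := funext fun i => by
    rcases eq_or_ne i 0 with rfl | hi
    · rw [hN0, pdMatrix_zero]
    · rw [hNi i (Nat.one_le_iff_ne_zero.mpr hi), pdMatrix_of_ne_zero c α hi]
  subst hN
  have hF : (m + 1) * ((2 ^ m - m - 1) / (m + 1) + 1) - 1 ≤ orderOf (α : K) := by
    have := Nat.mul_div_sub_add_one_le (k := m + 1) (n := 2 ^ m) Nat.lt_two_pow_self
    rw [← Nat.sub_sub] at this
    omega
  set F := (2 ^ m - m - 1) / (m + 1)
  have hPAut := inPAutH_pdMatrix c α.ne_zero hα1 (linearIndependent_of_coordinates c hc)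
  have hdisj := pairwiseDisjoint_image_hadInfo_pdMatrix c α.ne_zero (s := F + 1)
    (pow_injOn_Iio_orderOf.mono (Set.Iio_subset_Iio hF))
  have hmem : ∀ i, hadAct m (pdMatrix c α i) 0 ∈ (hadInfo m).image (hadAct m (pdMatrix c α i)) :=
    fun i => Finset.mem_image_of_mem _ (Finset.mem_insert_self 0 _)
  refine ⟨fun i _ => hPAut i, fun i j hi hj hij => ?_, fun E hE => ?_⟩
  · have hij' := Matrix.inv_inj hij ((Matrix.isUnit_iff_isUnit_det _).mp (hPAut i).1)
    exact hdisj.elim_finset (by simpa [Nat.lt_succ_iff]) (by simpa [Nat.lt_succ_iff]) _ (hmem i)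
      (hij' ▸ hmem j)
  · obtain ⟨i, hi, h⟩ := exists_forall_hadAct_inv_notMem_hadInfo (E := E)
      (fun i _ => hPAut i) hdisj (by simp [hE])
    exact ⟨i, Nat.lt_succ_iff.mp (Finset.mem_range.mp hi), h⟩
end

section
/- Let H be a quaternary linear code of length beta and type 2^gamma 4^delta, and let I be a quaternary information set for H. Then I ∪ {beta + 1} is a quaternary information set both for the doubled code 2H ⊆ Z_4^{2*beta} (which has type 2^{gamma+1} 4^delta) and for the quadrupled code 4H ⊆ Z_4^{4*beta} (which has type 2^gamma 4^{delta+1}); that is, |(2H)_{I ∪ {beta+1}}| = 2^{gamma+1} * 4^delta and |(4H)_{I ∪ {beta+1}}| = 2^gamma * 4^{delta+1}. -/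
/-!
STATEMENT 10: quaternary information sets for the doubled and quadrupled codes.
The doubled code `2H ⊆ Z_4^{2β}` (positions `Fin 2 × Fin β`, the flat position
`β + 1` being `((1 : Fin 2), 0)`) is
`{(u, u), (u, u + 2·1) : u ∈ H} = {(k, p) ↦ u p + 2·j·k : u ∈ H, j ∈ Z_4}`, and the
quadrupled code `4H ⊆ Z_4^{4β}` (positions `Fin 4 × Fin β`) is
`{(u,u,u,u), (u, u+1, u+2·1, u+3·1), (u, u+2·1, u, u+2·1), (u, u+3·1, u+2·1, u+1) :
u ∈ H} = {(k, p) ↦ u p + j·k : u ∈ H, j ∈ Z_4}`. -/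

/-- If `H` is a quaternary linear code of length `β` and type `2^γ 4^δ` and `I` is a
quaternary information set for `H`, then `I ∪ {β + 1}` is a quaternary information set
for both `2H` (of type `2^{γ+1} 4^δ`) and `4H` (of type `2^γ 4^{δ+1}`); that is,
`|(2H)_{I∪{β+1}}| = 2^{γ+1}·4^δ` and `|(4H)_{I∪{β+1}}| = 2^γ·4^{δ+1}`. -/
theorem stmt10 (β γ δ : ℕ) (hβ : 0 < β)
    (H : Finset (Fin β → ZMod 4)) (hne : H.Nonempty)
    (hadd : ∀ x ∈ H, ∀ y ∈ H, x + y ∈ H)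
    (hcard : H.card = 2 ^ γ * 4 ^ δ)
    (I : Finset (Fin β)) (hIcard : I.card = γ + δ)
    (hI : (H.image fun v => fun p : I => v p.1).card = 2 ^ γ * 4 ^ δ) :
    -- the index set `I ∪ {β+1}` has `γ + δ + 1` positions
    ((I.image fun p => ((0 : Fin 2), p)) ∪ {((1 : Fin 2), (⟨0, hβ⟩ : Fin β))}).card
        = γ + δ + 1 ∧
    ((I.image fun p => ((0 : Fin 4), p)) ∪ {((1 : Fin 4), (⟨0, hβ⟩ : Fin β))}).card
        = γ + δ + 1 ∧
    -- `I ∪ {β+1}` is a quaternary information set for the doubled code `2H`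
    (((H ×ˢ (Finset.univ : Finset (ZMod 4))).image
        (fun x => fun q : Fin 2 × Fin β => x.1 q.2 + 2 * x.2 * ((q.1 : ℕ) : ZMod 4))).image
      (fun v => fun p : ((I.image fun p => ((0 : Fin 2), p)) ∪
          {((1 : Fin 2), (⟨0, hβ⟩ : Fin β))} : Finset (Fin 2 × Fin β)) => v p.1)).card
      = 2 ^ (γ + 1) * 4 ^ δ ∧
    -- `I ∪ {β+1}` is a quaternary information set for the quadrupled code `4H`
    (((H ×ˢ (Finset.univ : Finset (ZMod 4))).image
        (fun x => fun q : Fin 4 × Fin β => x.1 q.2 + x.2 * ((q.1 : ℕ) : ZMod 4))).image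
      (fun v => fun p : ((I.image fun p => ((0 : Fin 4), p)) ∪
          {((1 : Fin 4), (⟨0, hβ⟩ : Fin β))} : Finset (Fin 4 × Fin β)) => v p.1)).card
      = 2 ^ γ * 4 ^ (δ + 1) := by
  classical
  have hres : Set.InjOn (fun v => fun p : I => v p.1) (H : Set (Fin β → ZMod 4)) := by
    apply Finset.injOn_of_card_image_eq
    rw [hI, hcard]
  set z : Fin β := ⟨0, hβ⟩ with hz
  refine ⟨?_, ?_, ?_, ?_⟩
  · rw [Finset.card_union_of_disjoint, Finset.card_image_of_injective _
      (fun a b h => congrArg Prod.snd h), Finset.card_singleton, hIcard]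
    simp [Finset.disjoint_left]
  · rw [Finset.card_union_of_disjoint, Finset.card_image_of_injective _
      (fun a b h => congrArg Prod.snd h), Finset.card_singleton, hIcard]
    simp [Finset.disjoint_left]
  · -- doubled code
    have hall : ∀ j : ZMod 4, ∃ j' ∈ ({0,1} : Finset (ZMod 4)),
        (2 : ZMod 4) * j' = 2 * j := by decide
    have innerEq : ((H ×ˢ (Finset.univ : Finset (ZMod 4))).image
        (fun x => fun q : Fin 2 × Fin β => x.1 q.2 + 2 * x.2 * ((q.1 : ℕ) : ZMod 4)))
        = ((H ×ˢ ({0,1} : Finset (ZMod 4))).image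
        (fun x => fun q : Fin 2 × Fin β => x.1 q.2 + 2 * x.2 * ((q.1 : ℕ) : ZMod 4))) := by
      apply Finset.Subset.antisymm
      · intro w hw
        rw [Finset.mem_image] at hw
        obtain ⟨⟨u, j⟩, hx, rfl⟩ := hw
        rw [Finset.mem_product] at hx
        obtain ⟨j', hj', hjj⟩ := hall j
        rw [Finset.mem_image]
        refine ⟨(u, j'), Finset.mem_product.2 ⟨hx.1, hj'⟩, ?_⟩
        funext q
        simp only
        rw [hjj]
      · apply Finset.image_subset_image
        apply Finset.product_subset_product_right
        intro x _; exact Finset.mem_univ x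
    rw [innerEq, Finset.card_image_of_injOn, Finset.card_image_of_injOn,
      Finset.card_product, hcard]
    · have : ({0,1} : Finset (ZMod 4)).card = 2 := by decide
      rw [this]; ring
    · -- inner map injective on H ×ˢ {0,1}
      rintro ⟨u, j⟩ hm ⟨u', j'⟩ hm' heq
      simp only [Finset.coe_product, Set.mem_prod, Finset.mem_coe] at hm hm'
      have hu : u = u' := by
        funext p
        have := congrFun heq ((0 : Fin 2), p)
        simpa using this
      subst hu
      have h2 : (2 : ZMod 4) * j = 2 * j' := by
        have := congrFun heq ((1 : Fin 2), z)
        simp only at this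
        have h1 : (((1 : Fin 2) : ℕ) : ZMod 4) = 1 := by decide
        rw [h1, mul_one, mul_one] at this
        exact add_left_cancel this
      have hj : j ∈ ({0,1} : Finset (ZMod 4)) := hm.2
      have hj' : j' ∈ ({0,1} : Finset (ZMod 4)) := hm'.2
      have key : ∀ a b : ZMod 4, a ∈ ({0,1} : Finset (ZMod 4)) →
          b ∈ ({0,1} : Finset (ZMod 4)) → (2 : ZMod 4) * a = 2 * b → a = b := by decide
      rw [key j j' hj hj' h2]
    · -- restriction injective on the inner image
      intro a ha b hb heq
      obtain ⟨⟨u, j⟩, hx, rfl⟩ := Finset.mem_image.1 (Finset.mem_coe.1 ha)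
      obtain ⟨⟨u', j'⟩, hx', rfl⟩ := Finset.mem_image.1 (Finset.mem_coe.1 hb)
      rw [Finset.mem_product] at hx hx'
      have hu : u = u' := by
        apply hres hx.1 hx'.1
        funext p
        have hp : ((0 : Fin 2), (p : Fin β)) ∈
            ((I.image fun p => ((0 : Fin 2), p)) ∪ {((1 : Fin 2), z)}) :=
          Finset.mem_union_left _ (Finset.mem_image_of_mem _ p.2)
        have := congrFun heq ⟨_, hp⟩
        simpa using this
      subst hu
      have hp1 : ((1 : Fin 2), z) ∈
          ((I.image fun p => ((0 : Fin 2), p)) ∪ {((1 : Fin 2), z)}) :=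
        Finset.mem_union_right _ (Finset.mem_singleton_self _)
      have h2 : (2 : ZMod 4) * j = 2 * j' := by
        have := congrFun heq ⟨_, hp1⟩
        simp only at this
        have h1 : (((1 : Fin 2) : ℕ) : ZMod 4) = 1 := by decide
        rw [h1, mul_one, mul_one] at this
        exact add_left_cancel this
      funext q
      simp only
      rw [h2]
  · -- quadrupled code
    rw [Finset.card_image_of_injOn, Finset.card_image_of_injOn,
      Finset.card_product, hcard]
    · rw [Finset.card_univ, ZMod.card]; ring
    · rintro ⟨u, j⟩ hm ⟨u', j'⟩ hm' heq
      simp only [Finset.coe_product, Set.mem_prod, Finset.mem_coe] at hm hm'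
      have hu : u = u' := by
        funext p
        have := congrFun heq ((0 : Fin 4), p)
        simpa using this
      subst hu
      have h2 : j = j' := by
        have := congrFun heq ((1 : Fin 4), z)
        simp only at this
        have h1 : (((1 : Fin 4) : ℕ) : ZMod 4) = 1 := by decide
        rw [h1, mul_one, mul_one] at this
        exact add_left_cancel this
      rw [h2]
    · intro a ha b hb heq
      obtain ⟨⟨u, j⟩, hx, rfl⟩ := Finset.mem_image.1 (Finset.mem_coe.1 ha)
      obtain ⟨⟨u', j'⟩, hx', rfl⟩ := Finset.mem_image.1 (Finset.mem_coe.1 hb)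
      rw [Finset.mem_product] at hx hx'
      have hu : u = u' := by
        apply hres hx.1 hx'.1
        funext p
        have hp : ((0 : Fin 4), (p : Fin β)) ∈
            ((I.image fun p => ((0 : Fin 4), p)) ∪ {((1 : Fin 4), z)}) :=
          Finset.mem_union_left _ (Finset.mem_image_of_mem _ p.2)
        have := congrFun heq ⟨_, hp⟩
        simpa using this
      subst hu
      have hp1 : ((1 : Fin 4), z) ∈
          ((I.image fun p => ((0 : Fin 4), p)) ∪ {((1 : Fin 4), z)}) :=
        Finset.mem_union_right _ (Finset.mem_singleton_self _)
      have h2 : j = j' := by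
        have := congrFun heq ⟨_, hp1⟩
        simp only at this
        have h1 : (((1 : Fin 4) : ℕ) : ZMod 4) = 1 := by decide
        rw [h1, mul_one, mul_one] at this
        exact add_left_cancel this
      rw [h2]
end

section
/- For integers gamma >= 0 and delta >= 1, the set L of (gamma+delta)x(gamma+delta) matrices over Z_4 of block form [[1, eta, 2*theta], [0, A, 2X], [0, Y, B]], where A in GL(delta-1, Z_4), B in GL(gamma, Z_4), X is a (delta-1)x gamma matrix over Z_4, Y is a gamma x (delta-1) matrix over Z_4, eta in Z_4^{delta-1} and theta in Z_4^gamma, is a subgroup of GL(gamma+delta, Z_4): every matrix in L has determinant a unit of Z_4 (i.e., 1 or 3), and L is closed under matrix multiplication and inverses. -/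
/-!
STATEMENT 11: the set `L` of block matrices is a subgroup of `GL(γ+δ, Z_4)`.
Throughout, `δ = e + 1` (so `e = δ - 1 ≥ 0` and `δ ≥ 1`), and `(γ+δ) × (γ+δ)`
matrices are indexed by `Unit ⊕ Fin e ⊕ Fin γ`, split into the blocks `1 | δ-1 | γ`.
-/

/-- Row/column index type for `(γ+δ) × (γ+δ)` matrices. -/
abbrev QIdx (e γ : ℕ) := Unit ⊕ Fin e ⊕ Fin γ

/-- Membership in `L`: `M` has block form `[[1, η, 2θ], [0, A, 2X], [0, Y, B]]` with
`A ∈ GL(δ-1, Z_4)`, `B ∈ GL(γ, Z_4)`, the entries of the `2θ`- and `2X`-blocks lying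
in `2·Z_4 = {0, 2}`, and `η`, `Y` arbitrary. -/
def inL (e γ : ℕ) (M : Matrix (QIdx e γ) (QIdx e γ) (ZMod 4)) : Prop :=
  (∀ i, M i (Sum.inl ()) = if i = Sum.inl () then 1 else 0) ∧
  (∀ j : Fin γ, ∃ a, M (Sum.inl ()) (Sum.inr (Sum.inr j)) = 2 * a) ∧
  IsUnit (Matrix.of fun i j : Fin e => M (Sum.inr (Sum.inl i)) (Sum.inr (Sum.inl j))) ∧
  (∀ (i : Fin e) (j : Fin γ), ∃ a, M (Sum.inr (Sum.inl i)) (Sum.inr (Sum.inr j)) = 2 * a) ∧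
  IsUnit (Matrix.of fun i j : Fin γ => M (Sum.inr (Sum.inr i)) (Sum.inr (Sum.inr j)))

abbrev φ4 : ZMod 4 →+* ZMod 2 := ZMod.castHom (show 2 ∣ 4 by norm_num) (ZMod 2)

lemma aux_two (x : ZMod 4) : (∃ a, x = 2 * a) ↔ φ4 x = 0 := by revert x; decide
lemma aux_unit (x : ZMod 4) : IsUnit x ↔ IsUnit (φ4 x) := by revert x; decide
lemma aux_unit13 (x : ZMod 4) : IsUnit x ↔ (x = 1 ∨ x = 3) := by revert x; decide

lemma mat_unit {n : Type*} [Fintype n] [DecidableEq n] (Q : Matrix n n (ZMod 4)) :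
    IsUnit Q ↔ IsUnit (Q.map φ4) := by
  rw [Matrix.isUnit_iff_isUnit_det, Matrix.isUnit_iff_isUnit_det,
    ← RingHom.mapMatrix_apply, ← RingHom.map_det, ← aux_unit]

lemma det_unit_of_inL (e γ : ℕ) (M : Matrix (QIdx e γ) (QIdx e γ) (ZMod 4))
    (h : inL e γ M) : IsUnit M.det := by
  obtain ⟨h1, h2, hA, hX, hB⟩ := h
  have h21 : M.toBlocks₂₁ = 0 := by
    ext i j
    cases j
    simp [Matrix.toBlocks₂₁, h1]
  have hM : M = Matrix.fromBlocks M.toBlocks₁₁ M.toBlocks₁₂ 0 M.toBlocks₂₂ := by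
    conv_lhs => rw [← Matrix.fromBlocks_toBlocks M, h21]
  rw [hM, Matrix.det_fromBlocks_zero₂₁]
  have h11 : M.toBlocks₁₁.det = 1 := by
    rw [Matrix.det_unique]
    simpa [Matrix.toBlocks₁₁] using h1 (Sum.inl ())
  rw [h11, one_mul, aux_unit, RingHom.map_det, RingHom.mapMatrix_apply]
  have hdecomp : M.toBlocks₂₂.map φ4 =
      Matrix.fromBlocks
        ((Matrix.of fun i j : Fin e => M (.inr (.inl i)) (.inr (.inl j))).map φ4) 0
        ((Matrix.of fun (i : Fin γ) (j : Fin e) => M (.inr (.inr i)) (.inr (.inl j))).map φ4)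
        ((Matrix.of fun i j : Fin γ => M (.inr (.inr i)) (.inr (.inr j))).map φ4) := by
    ext i j
    cases i <;> cases j <;>
      simp [Matrix.toBlocks₂₂, Matrix.fromBlocks, Matrix.map_apply]
    exact (aux_two _).mp (hX _ _)
  rw [hdecomp, Matrix.det_fromBlocks_zero₁₂]
  exact ((Matrix.isUnit_iff_isUnit_det _).mp ((mat_unit _).mp hA)).mul
        ((Matrix.isUnit_iff_isUnit_det _).mp ((mat_unit _).mp hB))
lemma one_inL (e γ : ℕ) : inL e γ (1 : Matrix (QIdx e γ) (QIdx e γ) (ZMod 4)) := by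
  refine ⟨fun i => Matrix.one_apply, fun j => ⟨0, by simp [Matrix.one_apply]⟩, ?_,
    fun i j => ⟨0, by simp [Matrix.one_apply]⟩, ?_⟩
  · have h : (Matrix.of fun i j : Fin e =>
        (1 : Matrix (QIdx e γ) (QIdx e γ) (ZMod 4)) (Sum.inr (Sum.inl i)) (Sum.inr (Sum.inl j))) = 1 := by
      ext i j; simp [Matrix.one_apply]
    rw [h]; exact isUnit_one
  · have h : (Matrix.of fun i j : Fin γ =>
        (1 : Matrix (QIdx e γ) (QIdx e γ) (ZMod 4)) (Sum.inr (Sum.inr i)) (Sum.inr (Sum.inr j))) = 1 := by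
      ext i j; simp [Matrix.one_apply]
    rw [h]; exact isUnit_one

lemma mul_inL (e γ : ℕ) (M N : Matrix (QIdx e γ) (QIdx e γ) (ZMod 4))
    (hM : inL e γ M) (hN : inL e γ N) : inL e γ (M * N) := by
  obtain ⟨hM1, hM2, hMA, hMX, hMB⟩ := hM
  obtain ⟨hN1, hN2, hNA, hNX, hNB⟩ := hN
  have hM0 : ∀ x, M (Sum.inr x) (Sum.inl ()) = 0 := fun x => by simpa using hM1 (Sum.inr x)
  have hM2' : ∀ j, φ4 (M (Sum.inl ()) (Sum.inr (Sum.inr j))) = 0 :=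
    fun j => (aux_two _).mp (hM2 j)
  have hMX' : ∀ i j, φ4 (M (Sum.inr (Sum.inl i)) (Sum.inr (Sum.inr j))) = 0 :=
    fun i j => (aux_two _).mp (hMX i j)
  have hN2' : ∀ j, φ4 (N (Sum.inl ()) (Sum.inr (Sum.inr j))) = 0 :=
    fun j => (aux_two _).mp (hN2 j)
  have hNX' : ∀ i j, φ4 (N (Sum.inr (Sum.inl i)) (Sum.inr (Sum.inr j))) = 0 :=
    fun i j => (aux_two _).mp (hNX i j)
  refine ⟨?_, ?_, ?_, ?_, ?_⟩
  · intro i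
    rw [Matrix.mul_apply]
    simp [hN1, mul_ite, Finset.sum_ite_eq', hM1 i]
  · intro j
    rw [aux_two, Matrix.mul_apply, map_sum]
    simp only [Fintype.sum_sum_type, map_mul, hN2', hNX', hM2', mul_zero, zero_mul,
      Finset.sum_const_zero, add_zero, zero_add, Finset.univ_unique, Finset.sum_singleton]
  · rw [mat_unit]
    have key : (Matrix.of fun i j : Fin e =>
          (M * N) (Sum.inr (Sum.inl i)) (Sum.inr (Sum.inl j))).map φ4
        = (Matrix.of fun i j : Fin e => M (Sum.inr (Sum.inl i)) (Sum.inr (Sum.inl j))).map φ4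
          * (Matrix.of fun i j : Fin e => N (Sum.inr (Sum.inl i)) (Sum.inr (Sum.inl j))).map φ4 := by
      ext i j
      simp only [Matrix.map_apply, Matrix.mul_apply, Matrix.of_apply, map_add, map_sum, map_mul,
        Fintype.sum_sum_type, hM0, map_zero, hMX', mul_zero, zero_mul, Finset.sum_const_zero,
        add_zero, zero_add, Finset.univ_unique, Finset.sum_singleton]
    rw [key]
    exact ((mat_unit _).mp hMA).mul ((mat_unit _).mp hNA)
  · intro i j
    rw [aux_two, Matrix.mul_apply, map_sum]
    simp only [Fintype.sum_sum_type, map_mul, hM0, map_zero, hMX', hNX', mul_zero, zero_mul,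
      Finset.sum_const_zero, add_zero, zero_add, Finset.univ_unique, Finset.sum_singleton]
  · rw [mat_unit]
    have key : (Matrix.of fun i j : Fin γ =>
          (M * N) (Sum.inr (Sum.inr i)) (Sum.inr (Sum.inr j))).map φ4
        = (Matrix.of fun i j : Fin γ => M (Sum.inr (Sum.inr i)) (Sum.inr (Sum.inr j))).map φ4
          * (Matrix.of fun i j : Fin γ => N (Sum.inr (Sum.inr i)) (Sum.inr (Sum.inr j))).map φ4 := by
      ext i j
      simp only [Matrix.map_apply, Matrix.mul_apply, Matrix.of_apply, map_add, map_sum, map_mul,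
        Fintype.sum_sum_type, hM0, map_zero, hNX', mul_zero, zero_mul, Finset.sum_const_zero,
        add_zero, zero_add, Finset.univ_unique, Finset.sum_singleton]
    rw [key]
    exact ((mat_unit _).mp hMB).mul ((mat_unit _).mp hNB)

/-- `L` is a subgroup of `GL(γ+δ, Z_4)`: every matrix in `L` has determinant a unit of
`Z_4` (i.e. `1` or `3`), the identity lies in `L`, and `L` is closed under matrix
multiplication and inverses. -/
theorem stmt11 (e γ : ℕ) :
    (∀ M : Matrix (QIdx e γ) (QIdx e γ) (ZMod 4), inL e γ M →
      IsUnit M.det ∧ (M.det = 1 ∨ M.det = 3)) ∧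
    inL e γ (1 : Matrix (QIdx e γ) (QIdx e γ) (ZMod 4)) ∧
    (∀ M N : Matrix (QIdx e γ) (QIdx e γ) (ZMod 4),
      inL e γ M → inL e γ N → inL e γ (M * N)) ∧
    (∀ M : Matrix (QIdx e γ) (QIdx e γ) (ZMod 4), inL e γ M → inL e γ M⁻¹) := by
  refine ⟨fun M h => ⟨det_unit_of_inL e γ M h,
      (aux_unit13 _).mp (det_unit_of_inL e γ M h)⟩, one_inL e γ, mul_inL e γ, ?_⟩
  intro M hM
  have hu : IsUnit M := (Matrix.isUnit_iff_isUnit_det M).mpr (det_unit_of_inL e γ M hM)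
  obtain ⟨u, hu'⟩ := hu
  have hpow : ∀ n, inL e γ (M ^ n) := by
    intro n
    induction n with
    | zero => simpa using one_inL e γ
    | succ n ih => rw [pow_succ]; exact mul_inL e γ _ _ ih hM
  have hord : orderOf u ≠ 0 := (orderOf_pos u).ne'
  have h1 : M ^ orderOf u = 1 := by
    rw [← hu', ← Units.val_pow_eq_pow_val, pow_orderOf_eq_one, Units.val_one]
  have h2 : M * M ^ (orderOf u - 1) = 1 := by
    rw [← pow_succ', Nat.sub_add_cancel (Nat.one_le_iff_ne_zero.mpr hord)]
    exact h1
  rw [Matrix.inv_eq_right_inv h2]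
  exact hpow _
end
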